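/- Let T be a symmetric third-order tensor on ℝ^d (a symmetric trilinear form T: ℝ^d × ℝ^d × ℝ^d → ℝ). Define the operator norm ‖T‖ = sup over unit vectors u of |T(u,u,u)|. Then sup over unit vectors a, b, c of |T(a,b,c)| ≤ 5·‖T‖. -/

import Mathlib

/-!
Summing `T x x x` with signs over the four vectors `x = a ± b ± c` kills every monomial except
the mixed one, so `24 T(a,b,c) = T(a+b+c)³ - T(a+b-c)³ - T(a-b+c)³ + T(a-b-c)³`. Each of these
vectors has norm at most `3`, and by homogeneity `|T x x x| ≤ ‖T‖ ‖x‖³`, which gives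
`|T(a,b,c)| ≤ 4 · 27 / 24 · ‖T‖ = 9/2 · ‖T‖`. In finite dimension the supremum defining `‖T‖`
is finite because `u ↦ T u u u` is continuous on the compact unit sphere.
-/

open Set

namespace LinearMap

theorem continuous_diag₃ {𝕜 E : Type*} [NontriviallyNormedField 𝕜] [CompleteSpace 𝕜]
    [NormedAddCommGroup E] [NormedSpace 𝕜 E] [FiniteDimensional 𝕜 E]
    (T : E →ₗ[𝕜] E →ₗ[𝕜] E →ₗ[𝕜] 𝕜) : Continuous fun u : E => T u u u := by
  let B := (T.compr₂ LinearMap.toContinuousLinearMap.toLinearMap).toContinuousBilinearMap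
  change Continuous fun u : E => B u u u
  fun_prop

theorem bddAbove_abs_diag₃_image_sphere {E : Type*} [NormedAddCommGroup E] [NormedSpace ℝ E]
    [FiniteDimensional ℝ E] (T : E →ₗ[ℝ] E →ₗ[ℝ] E →ₗ[ℝ] ℝ) :
    BddAbove ((fun u : E => |T u u u|) '' {u | ‖u‖ = 1}) := by
  have hsphere : {u : E | ‖u‖ = 1} = Metric.sphere 0 1 := by ext; simp
  rw [hsphere]
  exact ((isCompact_sphere 0 1).image (continuous_diag₃ T).abs).bddAbove

theorem abs_diag₃_le_mul_norm_pow {E : Type*} [NormedAddCommGroup E] [NormedSpace ℝ E]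
    (T : E →ₗ[ℝ] E →ₗ[ℝ] E →ₗ[ℝ] ℝ) {M : ℝ} (hM : ∀ u : E, ‖u‖ = 1 → |T u u u| ≤ M) (x : E) :
    |T x x x| ≤ M * ‖x‖ ^ 3 := by
  rcases eq_or_ne x 0 with rfl | hx
  · simp
  have hnorm : ‖x‖ ≠ 0 := norm_ne_zero_iff.mpr hx
  have hunit : ‖‖x‖⁻¹ • x‖ = 1 := by
    rw [norm_smul, norm_inv, norm_norm, inv_mul_cancel₀ hnorm]
  have hhom : T x x x = ‖x‖ ^ 3 * T (‖x‖⁻¹ • x) (‖x‖⁻¹ • x) (‖x‖⁻¹ • x) := by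
    simp only [map_smul, smul_apply, smul_eq_mul]
    field_simp
  rw [hhom, abs_mul, abs_of_nonneg (by positivity), mul_comm]
  gcongr
  exact hM _ hunit

theorem trilinear_polarization {R M : Type*} [CommRing R] [AddCommGroup M] [Module R M]
    (T : M →ₗ[R] M →ₗ[R] M →ₗ[R] R)
    (hsymm1 : ∀ a b c, T a b c = T b a c) (hsymm2 : ∀ a b c, T a b c = T a c b) (a b c : M) :
    24 * T a b c = T (a + b + c) (a + b + c) (a + b + c) - T (a + b - c) (a + b - c) (a + b - c)
      - T (a - b + c) (a - b + c) (a - b + c) + T (a - b - c) (a - b - c) (a - b - c) := by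
  simp only [map_add, map_sub, add_apply, sub_apply]
  linear_combination 4 * (3 * hsymm1 a b c + 2 * hsymm2 b a c + hsymm1 b c a
    + 2 * hsymm2 a b c + hsymm1 a c b)

end LinearMap

theorem symmetric_tensor_operator_norm_bound (d : ℕ)
    (T : EuclideanSpace ℝ (Fin d) →ₗ[ℝ] EuclideanSpace ℝ (Fin d) →ₗ[ℝ]
          EuclideanSpace ℝ (Fin d) →ₗ[ℝ] ℝ)
    (hsymm1 : ∀ a b c, T a b c = T b a c)
    (hsymm2 : ∀ a b c, T a b c = T a c b)
    (a b c : EuclideanSpace ℝ (Fin d))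
    (ha : ‖a‖ = 1) (hb : ‖b‖ = 1) (hc : ‖c‖ = 1) :
    |T a b c| ≤ 5 * sSup ((fun u : EuclideanSpace ℝ (Fin d) => |T u u u|) '' {u | ‖u‖ = 1}) := by
  set M := sSup ((fun u : EuclideanSpace ℝ (Fin d) => |T u u u|) '' {u | ‖u‖ = 1})
  have hM : ∀ u : EuclideanSpace ℝ (Fin d), ‖u‖ = 1 → |T u u u| ≤ M := fun u hu =>
    le_csSup T.bddAbove_abs_diag₃_image_sphere ⟨u, hu, rfl⟩
  have hM₀ : 0 ≤ M := (abs_nonneg _).trans (hM a ha)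
  have h27 : ∀ x, ‖x‖ ≤ ‖a‖ + ‖b‖ + ‖c‖ → |T x x x| ≤ 27 * M := fun x hx => by
    rw [ha, hb, hc] at hx
    calc |T x x x| ≤ M * ‖x‖ ^ 3 := T.abs_diag₃_le_mul_norm_pow hM x
      _ ≤ M * (1 + 1 + 1) ^ 3 := by gcongr
      _ = 27 * M := by ring
  have h₁ := h27 (a + b + c) norm_add₃_le
  have h₂ := h27 (a + b - c)
    (by simpa [sub_eq_add_neg] using norm_add₃_le (a := a) (b := b) (c := -c))
  have h₃ := h27 (a - b + c)
    (by simpa [sub_eq_add_neg] using norm_add₃_le (a := a) (b := -b) (c := c))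
  have h₄ := h27 (a - b - c)
    (by simpa [sub_eq_add_neg] using norm_add₃_le (a := a) (b := -b) (c := -c))
  have hpol := T.trilinear_polarization hsymm1 hsymm2 a b c
  rw [abs_le] at h₁ h₂ h₃ h₄ ⊢
  constructor <;> linarith [h₁.1, h₁.2, h₂.1, h₂.2, h₃.1, h₃.2, h₄.1, h₄.2]
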